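/- For each n ∈ ℕ, the class 𝒜ₙ is (n+1)-bisimulation invariant: if (A, w) and (B, v) are (n+1)-bisimilar pointed frames and (A, w) ∈ 𝒜ₙ, then (B, v) ∈ 𝒜ₙ. -/
import Mathlib


universe u v

/-- A Kripke model for a set `Φ` of proposition symbols: a set of worlds `W`,
an accessibility relation `R` and a valuation `V`. -/
structure KripkeModel (Φ : Type) : Type (u + 1) where
  W : Type u
  R : W → W → Prop
  V : Φ → W → Prop

/-- A pointed Kripke model: a Kripke model together with a distinguished world. -/
structure PointedModel (Φ : Type) : Type (u + 1) where
  M : KripkeModel.{u} Φ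
  w : M.W

/-- `n`-bisimilarity of pointed models: there are relations `Zₙ ⊆ … ⊆ Z₀` such that the
distinguished pair is in `Zₙ`, `Z₀` relates only propositionally equivalent points, and the
back-and-forth conditions hold for each `0 ≤ i ≤ n-1`. -/
def NBisim {Φ : Type} (n : ℕ) (M : KripkeModel.{u} Φ) (w : M.W)
    (N : KripkeModel.{v} Φ) (x : N.W) : Prop :=
  ∃ Z : ℕ → M.W → N.W → Prop,
    (∀ i, i < n → ∀ a b, Z (i + 1) a b → Z i a b) ∧
    Z n w x ∧
    (∀ a b, Z 0 a b → ∀ p, M.V p a ↔ N.V p b) ∧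
    (∀ i, i < n → ∀ a b, Z (i + 1) a b → ∀ c, M.R a c → ∃ d, N.R b d ∧ Z i c d) ∧
    (∀ i, i < n → ∀ a b, Z (i + 1) a b → ∀ d, N.R b d → ∃ c, M.R a c ∧ Z i c d)

/-- The class `𝒜ₙ` of all pointed frames `(A, w)` such that any two `R`-successors of `w`
are `n`-bisimilar.  Its complement is the class `ℬₙ`. -/
def classA (n : ℕ) : Set (PointedModel.{u} Empty) :=
  {P | ∀ a b : P.M.W, P.M.R P.w a → P.M.R P.w b → NBisim n P.M a P.M b}

universe u₁ u₂ u₃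

lemma nbisim_symm {Φ : Type} {n : ℕ} {M : KripkeModel.{u₁} Φ} {w : M.W}
    {N : KripkeModel.{u₂} Φ} {x : N.W} (h : NBisim n M w N x) : NBisim n N x M w := by
  obtain ⟨Z, hmono, hZ, hprop, hf, hb⟩ := h
  exact ⟨fun i b a => Z i a b, fun i hi a b hz => hmono i hi b a hz, hZ,
    fun a b hz p => (hprop b a hz p).symm,
    fun i hi a b hz c hc => hb i hi b a hz c hc,
    fun i hi a b hz d hd => hf i hi b a hz d hd⟩

lemma nbisim_trans {Φ : Type} {n : ℕ} {M : KripkeModel.{u₁} Φ} {w : M.W}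
    {N : KripkeModel.{u₂} Φ} {x : N.W} {O : KripkeModel.{u₃} Φ} {y : O.W}
    (h1 : NBisim n M w N x) (h2 : NBisim n N x O y) : NBisim n M w O y := by
  obtain ⟨Z1, hm1, hZ1, hp1, hf1, hb1⟩ := h1
  obtain ⟨Z2, hm2, hZ2, hp2, hf2, hb2⟩ := h2
  refine ⟨fun i a c => ∃ b, Z1 i a b ∧ Z2 i b c, ?_, ⟨x, hZ1, hZ2⟩, ?_, ?_, ?_⟩
  · rintro i hi a c ⟨b, h1, h2⟩
    exact ⟨b, hm1 i hi a b h1, hm2 i hi b c h2⟩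
  · rintro a c ⟨b, h1, h2⟩ p
    exact (hp1 a b h1 p).trans (hp2 b c h2 p)
  · rintro i hi a c ⟨b, h1, h2⟩ a' ha'
    obtain ⟨b', hb', hz1⟩ := hf1 i hi a b h1 a' ha'
    obtain ⟨c', hc', hz2⟩ := hf2 i hi b c h2 b' hb'
    exact ⟨c', hc', b', hz1, hz2⟩
  · rintro i hi a c ⟨b, h1, h2⟩ c' hc'
    obtain ⟨b', hb', hz2⟩ := hb2 i hi b c h2 c' hc'
    obtain ⟨a', ha', hz1⟩ := hb1 i hi a b h1 b' hb'
    exact ⟨a', ha', b', hz1, hz2⟩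

/-- **Lemma 10 (Hella–Vilander).**  The class `𝒜ₙ` is `(n+1)`-bisimulation invariant. -/
theorem classA_invariant_under_succ_bisim (n : ℕ) (P Q : PointedModel.{u} Empty)
    (hbisim : NBisim (n + 1) P.M P.w Q.M Q.w) (hP : P ∈ classA.{u} n) :
    Q ∈ classA.{u} n := by
  intro b1 b2 hb1 hb2
  obtain ⟨Z, hmono, hZ, hprop, hf, hb⟩ := hbisim
  obtain ⟨a1, ha1, hz1⟩ := hb n (Nat.lt_succ_self n) P.w Q.w hZ b1 hb1
  obtain ⟨a2, ha2, hz2⟩ := hb n (Nat.lt_succ_self n) P.w Q.w hZ b2 hb2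
  have h1 : NBisim n P.M a1 Q.M b1 :=
    ⟨Z, fun i hi => hmono i (hi.trans (Nat.lt_succ_self n)), hz1, hprop,
      fun i hi => hf i (hi.trans (Nat.lt_succ_self n)),
      fun i hi => hb i (hi.trans (Nat.lt_succ_self n))⟩
  have h2 : NBisim n P.M a2 Q.M b2 :=
    ⟨Z, fun i hi => hmono i (hi.trans (Nat.lt_succ_self n)), hz2, hprop,
      fun i hi => hf i (hi.trans (Nat.lt_succ_self n)),
      fun i hi => hb i (hi.trans (Nat.lt_succ_self n))⟩
  exact nbisim_trans (nbisim_trans (nbisim_symm h1) (hP a1 a2 ha1 ha2)) h2
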